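/- arXiv:cs/9905010 — 3 statements merged into one kernel-verified Lean document; each statement's English description precedes it below -/
import Mathlib

section
/- Under the stated setup, for every λ ∈ ℝ^n with Z_λ finite and every direction γ ∈ ℝ^n, assuming that for some ε > 0 both Z_{λ+tγ} is finite for all |t| < ε and termwise differentiation of all the relevant series at t = 0 is justified by a summable dominating function on (−ε, ε), the functions t ↦ A(tγ, λ) and t ↦ L(λ + tγ) are differentiable at t = 0 and their derivatives at t = 0 coincide; both equal ∑_{y∈𝒴} (k_λ[γ·ν] − p_λ[γ·ν]). -/
/- Common setup: log-linear models over proof trees (complete data X) and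
   queries (incomplete data Y). -/

variable {X Y : Type*}

/-- `ν_#(x) = ∑ i, ν_i(x)`. -/
def nuSharp {n : ℕ} (ν : Fin n → X → ℕ) (x : X) : ℕ := ∑ i, ν i x

/-- weighted property sum `λ·ν(x)`. -/
noncomputable def wdot {n : ℕ} (l : Fin n → ℝ) (ν : Fin n → X → ℕ) (x : X) : ℝ :=
  ∑ i, l i * (ν i x : ℝ)

/-- normalizing constant `Z_λ`. -/
noncomputable def Zpart (p0 : X → ℝ) {n : ℕ} (ν : Fin n → X → ℕ) (l : Fin n → ℝ) : ℝ :=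
  ∑' x : X, Real.exp (wdot l ν x) * p0 x

/-- log-linear distribution `p_λ(x)`. -/
noncomputable def pLL (p0 : X → ℝ) {n : ℕ} (ν : Fin n → X → ℕ) (l : Fin n → ℝ) (x : X) : ℝ :=
  (Zpart p0 ν l)⁻¹ * Real.exp (wdot l ν x) * p0 x

/-- incomplete-data probability `p_λ(y) = ∑_{x ∈ X(y)} p_λ(x)`. -/
noncomputable def pLLY (Yf : X → Y) (p0 : X → ℝ) {n : ℕ} (ν : Fin n → X → ℕ)
    (l : Fin n → ℝ) (y : Y) : ℝ :=
  ∑' x : {x : X // Yf x = y}, pLL p0 ν l x.1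

/-- incomplete-data log-likelihood `L(λ) = ∑_{y ∈ 𝒴} ln p_λ(y)`. -/
noncomputable def LL (Yf : X → Y) (p0 : X → ℝ) {n : ℕ} (ν : Fin n → X → ℕ)
    (𝒴 : Multiset Y) (l : Fin n → ℝ) : ℝ :=
  (𝒴.map fun y => Real.log (pLLY Yf p0 ν l y)).sum

/-- expectation `p_λ[f]`. -/
noncomputable def pExp (p0 : X → ℝ) {n : ℕ} (ν : Fin n → X → ℕ) (l : Fin n → ℝ)
    (f : X → ℝ) : ℝ :=
  ∑' x : X, pLL p0 ν l x * f x

/-- conditional expectation `k_λ[f]` given observed `y`. -/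
noncomputable def kExp (Yf : X → Y) (p0 : X → ℝ) {n : ℕ} (ν : Fin n → X → ℕ)
    (l : Fin n → ℝ) (y : Y) (f : X → ℝ) : ℝ :=
  ∑' x : {x : X // Yf x = y}, (pLL p0 ν l x.1 / pLLY Yf p0 ν l y) * f x.1

/-- auxiliary function
`A(γ,λ) = ∑_{y∈𝒴} (1 + k_λ[γ·ν] − p_λ[∑ i, ν̄_i e^{γ_i ν_#}])`. -/
noncomputable def Aaux (Yf : X → Y) (p0 : X → ℝ) {n : ℕ} (ν : Fin n → X → ℕ)
    (𝒴 : Multiset Y) (γ l : Fin n → ℝ) : ℝ :=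
  (𝒴.map fun y =>
    1 + kExp Yf p0 ν l y (fun x => wdot γ ν x)
      - pExp p0 ν l (fun x =>
          ∑ i, ((ν i x : ℝ) / (nuSharp ν x : ℝ)) * Real.exp (γ i * (nuSharp ν x : ℝ)))).sum

/- Along the line `λ + tγ` we have `p(y) = N(t) / Z(t)`, where `N` and `Z` are the unnormalised
masses `∑ e^{(λ+tγ)·ν} p₀` of `X(y)` and of `X`. The domination hypotheses allow both series to be
differentiated termwise, which brings down the factor `γ·ν`; hence
`(ln p(y))'(0) = N'(0)/N(0) - Z'(0)/Z(0) = k_λ[γ·ν] - p_λ[γ·ν]`. In `A(tγ, λ)` the `k`-term is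
linear in `t`, and differentiating `p_λ[∑ ν̄_i e^{tγ_i ν_#}]` termwise at `0` gives
`p_λ[∑ ν̄_i γ_i ν_#] = p_λ[γ·ν]`. -/

theorem HasDerivAt.multiset_sum_map {α 𝕜 F : Type*} [NontriviallyNormedField 𝕜]
    [NormedAddCommGroup F] [NormedSpace 𝕜 F] {s : Multiset α} {f : α → 𝕜 → F} {f' : α → F}
    {t : 𝕜} (hf : ∀ a ∈ s, HasDerivAt (f a) (f' a) t) :
    HasDerivAt (fun t => (s.map fun a => f a t).sum) (s.map f').sum t := by
  induction s using Multiset.induction_on with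
  | empty => simpa using hasDerivAt_const t (0 : F)
  | cons a s ih =>
    simp only [Multiset.map_cons, Multiset.sum_cons]
    exact (hf a (Multiset.mem_cons_self a s)).add
      (ih fun b hb => hf b (Multiset.mem_cons_of_mem hb))

theorem hasDerivAt_tsum_zero_of_dominated {ι F : Type*} [NormedAddCommGroup F] [NormedSpace ℝ F]
    [CompleteSpace F] {f f' : ι → ℝ → F} {g : ι → ℝ} {ε : ℝ} (hε : 0 < ε) (hg : Summable g)
    (hf : ∀ i t, |t| < ε → HasDerivAt (f i) (f' i t) t)
    (hf'g : ∀ i t, |t| < ε → ‖f' i t‖ ≤ g i) (hf0 : Summable fun i => f i 0) :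
    HasDerivAt (fun t => ∑' i, f i t) (∑' i, f' i 0) 0 := by
  have hmem : ∀ {t : ℝ}, t ∈ Set.Ioo (-ε) ε → |t| < ε := fun ht => abs_lt.2 ht
  exact hasDerivAt_tsum_of_isPreconnected hg isOpen_Ioo isPreconnected_Ioo
    (fun i t ht => hf i t (hmem ht)) (fun i t ht => hf'g i t (hmem ht))
    (by simpa using hε) hf0 (by simpa using hε)

section LogLinear

variable {n : ℕ} (ν : Fin n → X → ℕ)

theorem wdot_add (l γ : Fin n → ℝ) (x : X) : wdot (l + γ) ν x = wdot l ν x + wdot γ ν x := by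
  simp [wdot, add_mul, Finset.sum_add_distrib]

theorem wdot_smul (t : ℝ) (γ : Fin n → ℝ) (x : X) : wdot (t • γ) ν x = t * wdot γ ν x := by
  simp [wdot, Finset.mul_sum, mul_assoc]

theorem nuBar_mul_nuSharp (i : Fin n) (x : X) :
    (ν i x : ℝ) / nuSharp ν x * nuSharp ν x = ν i x := by
  rcases eq_or_ne (nuSharp ν x) 0 with h | h
  · have : ν i x = 0 := Nat.eq_zero_of_le_zero <|
      h ▸ Finset.single_le_sum (fun j _ => Nat.zero_le (ν j x)) (Finset.mem_univ i)
    simp [this]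
  · exact div_mul_cancel₀ _ (Nat.cast_ne_zero.2 h)

variable (p0 : X → ℝ) (l γ : Fin n → ℝ)

theorem hasDerivAt_exp_wdot_line_mul (c : ℝ) (x : X) (t : ℝ) :
    HasDerivAt (fun s : ℝ => Real.exp (wdot (l + s • γ) ν x) * c)
      (wdot γ ν x * Real.exp (wdot (l + t • γ) ν x) * c) t := by
  simp only [wdot_add, wdot_smul]
  exact (((hasDerivAt_mul_const (wdot γ ν x)).const_add (wdot l ν x)).exp.mul_const c)
    |>.congr_deriv (by ring)

theorem hasDerivAt_tsum_exp_wdot_line {ι : Type*} (e : ι → X) (hp0 : ∀ i, 0 ≤ p0 (e i))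
    {ε : ℝ} (hε : 0 < ε) {g : ι → ℝ} (hg : Summable g)
    (hbound : ∀ i t, |t| < ε →
      |wdot γ ν (e i)| * Real.exp (wdot (l + t • γ) ν (e i)) * p0 (e i) ≤ g i)
    (hsum : Summable fun i => Real.exp (wdot l ν (e i)) * p0 (e i)) :
    HasDerivAt (fun t : ℝ => ∑' i, Real.exp (wdot (l + t • γ) ν (e i)) * p0 (e i))
      (∑' i, wdot γ ν (e i) * Real.exp (wdot l ν (e i)) * p0 (e i)) 0 := by
  have hderiv_bound : ∀ i t, |t| < ε →
      ‖wdot γ ν (e i) * Real.exp (wdot (l + t • γ) ν (e i)) * p0 (e i)‖ ≤ g i := by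
    intro i t ht
    rw [Real.norm_eq_abs, abs_mul, abs_mul, abs_of_pos (Real.exp_pos _), abs_of_nonneg (hp0 i)]
    exact hbound i t ht
  simpa using hasDerivAt_tsum_zero_of_dominated hε hg
    (fun i t _ => hasDerivAt_exp_wdot_line_mul ν l γ (p0 (e i)) (e i) t) hderiv_bound
    (by simpa using hsum)

theorem pLLY_eq_inv_mul (Yf : X → Y) (y : Y) :
    pLLY Yf p0 ν l y
      = (Zpart p0 ν l)⁻¹ * ∑' x : {x : X // Yf x = y}, Real.exp (wdot l ν x) * p0 x := by
  simp only [pLLY, pLL, ← tsum_mul_left, mul_assoc]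

theorem Zpart_ne_zero_of_pLLY_ne_zero {Yf : X → Y} {y : Y} (h : pLLY Yf p0 ν l y ≠ 0) :
    Zpart p0 ν l ≠ 0 := by
  rintro hZ
  simp [pLLY_eq_inv_mul, hZ] at h

theorem pExp_eq_div (f : X → ℝ) :
    pExp p0 ν l f = (∑' x, f x * Real.exp (wdot l ν x) * p0 x) / Zpart p0 ν l := by
  simp only [pExp, pLL, div_eq_inv_mul, ← tsum_mul_left]
  exact tsum_congr fun x => by ring

theorem kExp_eq_div (Yf : X → Y) (y : Y) (f : X → ℝ) (hZ : Zpart p0 ν l ≠ 0) :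
    kExp Yf p0 ν l y f
      = (∑' x : {x : X // Yf x = y}, f x * Real.exp (wdot l ν x) * p0 x)
        / ∑' x : {x : X // Yf x = y}, Real.exp (wdot l ν x) * p0 x := by
  rw [kExp, pLLY_eq_inv_mul, div_eq_mul_inv _ (∑' _, _), ← tsum_mul_right]
  refine tsum_congr fun x => ?_
  rw [pLL, mul_assoc, mul_div_mul_left _ _ (inv_ne_zero hZ)]
  ring

theorem kExp_wdot_smul (Yf : X → Y) (y : Y) (t : ℝ) :
    kExp Yf p0 ν l y (wdot (t • γ) ν) = t * kExp Yf p0 ν l y (wdot γ ν) := by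
  simp only [kExp, wdot_smul, ← tsum_mul_left]
  exact tsum_congr fun x => by ring

theorem hasDerivAt_log_pLLY_line (hp0 : ∀ x, 0 ≤ p0 x) (Yf : X → Y) (y : Y)
    (hy : pLLY Yf p0 ν l y ≠ 0) (hZ : Summable fun x => Real.exp (wdot l ν x) * p0 x)
    {ε : ℝ} (hε : 0 < ε) {g : X → ℝ} (hg : Summable g)
    (hbound : ∀ x t, |t| < ε → |wdot γ ν x| * Real.exp (wdot (l + t • γ) ν x) * p0 x ≤ g x) :
    HasDerivAt (fun t : ℝ => Real.log (pLLY Yf p0 ν (l + t • γ) y))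
      (kExp Yf p0 ν l y (wdot γ ν) - pExp p0 ν l (wdot γ ν)) 0 := by
  have hZ0 : Zpart p0 ν l ≠ 0 := Zpart_ne_zero_of_pLLY_ne_zero ν p0 l hy
  have hN0 : ∑' x : {x : X // Yf x = y}, Real.exp (wdot l ν x) * p0 x ≠ 0 := by
    rw [pLLY_eq_inv_mul] at hy
    exact right_ne_zero_of_mul hy
  have hZ' : HasDerivAt (fun t : ℝ => Zpart p0 ν (l + t • γ))
      (∑' x, wdot γ ν x * Real.exp (wdot l ν x) * p0 x) 0 :=
    hasDerivAt_tsum_exp_wdot_line ν p0 l γ (fun x => x) hp0 hε hg hbound hZ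
  have hN' := hasDerivAt_tsum_exp_wdot_line ν p0 l γ (Subtype.val : {x // Yf x = y} → X)
    (fun x => hp0 x) hε (hg.comp_injective Subtype.val_injective) (fun x => hbound x)
    (hZ.comp_injective Subtype.val_injective)
  simp only [pLLY_eq_inv_mul]
  refine (((hZ'.fun_inv (by simpa using hZ0)).fun_mul hN').log
    (by simpa using ⟨hZ0, hN0⟩)).congr_deriv ?_
  simp only [zero_smul, add_zero]
  rw [kExp_eq_div ν p0 l Yf y _ hZ0, pExp_eq_div]
  field_simp
  ring

theorem hasDerivAt_pExp_nuBar_exp {ε : ℝ} (hε : 0 < ε) {g : X → ℝ} (hg : Summable g)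
    (hbound : ∀ x t, |t| < ε →
      |pLL p0 ν l x * ∑ i, ((ν i x : ℝ) / nuSharp ν x) * (γ i * nuSharp ν x) *
        Real.exp (t * γ i * nuSharp ν x)| ≤ g x)
    (hsum : Summable fun x => pLL p0 ν l x * ∑ i, (ν i x : ℝ) / nuSharp ν x) :
    HasDerivAt
      (fun t : ℝ => pExp p0 ν l fun x =>
        ∑ i, ((ν i x : ℝ) / nuSharp ν x) * Real.exp ((t • γ) i * nuSharp ν x))
      (pExp p0 ν l (wdot γ ν)) 0 := by
  have hterm : ∀ x t, HasDerivAt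
      (fun s : ℝ => pLL p0 ν l x *
        ∑ i, ((ν i x : ℝ) / nuSharp ν x) * Real.exp (s * γ i * nuSharp ν x))
      (pLL p0 ν l x * ∑ i, ((ν i x : ℝ) / nuSharp ν x) * (γ i * nuSharp ν x) *
        Real.exp (t * γ i * nuSharp ν x)) t := fun x t =>
    (HasDerivAt.fun_sum fun i _ =>
      ((((hasDerivAt_mul_const (γ i)).mul_const (nuSharp ν x : ℝ)).exp).const_mul
        ((ν i x : ℝ) / nuSharp ν x)).congr_deriv (by ring)).const_mul (pLL p0 ν l x)
  refine (hasDerivAt_tsum_zero_of_dominated hε hg (fun x t _ => hterm x t) hbound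
    (by simpa using hsum)).congr_deriv
    (tsum_congr fun x => congrArg _ (Finset.sum_congr rfl fun i _ => ?_))
  rw [zero_mul, zero_mul, Real.exp_zero, mul_one, mul_left_comm, nuBar_mul_nuSharp, mul_comm]

end LogLinear

theorem auxiliary_likelihood_derivatives_agree_general
    {X Y : Type*} (Yf : X → Y)
    (p0 : X → ℝ) (hp0 : ∀ x, 0 < p0 x)
    {n : ℕ} (ν : Fin n → X → ℕ)
    (𝒴 : Multiset Y) (l γ : Fin n → ℝ)
    (hZl : Summable fun x : X => Real.exp (wdot l ν x) * p0 x)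
    (hpos : ∀ y ∈ 𝒴, 0 < pLLY Yf p0 ν l y)
    (ε : ℝ) (hε : 0 < ε)
    (hdom1 : ∃ g : X → ℝ, Summable g ∧ ∀ (x : X) (t : ℝ), |t| < ε →
      |wdot γ ν x| * Real.exp (wdot (l + t • γ) ν x) * p0 x ≤ g x)
    (hdom2 : ∃ g : X → ℝ, Summable g ∧ ∀ (x : X) (t : ℝ), |t| < ε →
      |pLL p0 ν l x * ∑ i, ((ν i x : ℝ) / (nuSharp ν x : ℝ)) * (γ i * (nuSharp ν x : ℝ)) *
        Real.exp (t * γ i * (nuSharp ν x : ℝ))| ≤ g x)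
    (hpsum : ∀ t : ℝ, |t| < ε → Summable fun x : X => pLL p0 ν l x *
      ∑ i, ((ν i x : ℝ) / (nuSharp ν x : ℝ)) * Real.exp (t * γ i * (nuSharp ν x : ℝ))) :
    HasDerivAt (fun t : ℝ => Aaux Yf p0 ν 𝒴 (t • γ) l)
      ((𝒴.map fun y => kExp Yf p0 ν l y (fun x => wdot γ ν x)
        - pExp p0 ν l (fun x => wdot γ ν x)).sum) 0 ∧
    HasDerivAt (fun t : ℝ => LL Yf p0 ν 𝒴 (l + t • γ))
      ((𝒴.map fun y => kExp Yf p0 ν l y (fun x => wdot γ ν x)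
        - pExp p0 ν l (fun x => wdot γ ν x)).sum) 0 := by
  obtain ⟨g₁, hg₁, hbound₁⟩ := hdom1
  obtain ⟨g₂, hg₂, hbound₂⟩ := hdom2
  have hpExp := hasDerivAt_pExp_nuBar_exp ν p0 l γ hε hg₂ hbound₂
    (by simpa using hpsum 0 (by simpa))
  refine ⟨HasDerivAt.multiset_sum_map fun y _ => ?_, HasDerivAt.multiset_sum_map fun y hy => ?_⟩
  · simp only [kExp_wdot_smul]
    exact ((hasDerivAt_mul_const _).const_add 1).sub hpExp
  · exact hasDerivAt_log_pLLY_line ν p0 l γ (fun x => (hp0 x).le) Yf y (hpos y hy).ne' hZl hε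
      hg₁ hbound₁

/-- Lemma 3: the directional derivatives of `A(·,λ)` at `0` and of `L` at `λ`
exist and coincide, both being `∑_{y∈𝒴} (k_λ[γ·ν] − p_λ[γ·ν])`. -/
theorem auxiliary_likelihood_derivatives_agree
    {X Y : Type*} [Countable X] (Yf : X → Y)
    (p0 : X → ℝ) (hp0 : ∀ x, 0 < p0 x) (hp0sum : ∑' x : X, p0 x = 1)
    {n : ℕ} (ν : Fin n → X → ℕ) (hν : ∀ x, 1 ≤ nuSharp ν x)
    (𝒴 : Multiset Y) (l γ : Fin n → ℝ)
    (hZl : Summable fun x : X => Real.exp (wdot l ν x) * p0 x)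
    (hpos : ∀ y ∈ 𝒴, 0 < pLLY Yf p0 ν l y)
    (ε : ℝ) (hε : 0 < ε)
    (hZt : ∀ t : ℝ, |t| < ε → Summable fun x : X => Real.exp (wdot (l + t • γ) ν x) * p0 x)
    (hdom1 : ∃ g : X → ℝ, Summable g ∧ ∀ (x : X) (t : ℝ), |t| < ε →
      |wdot γ ν x| * Real.exp (wdot (l + t • γ) ν x) * p0 x ≤ g x)
    (hdom2 : ∃ g : X → ℝ, Summable g ∧ ∀ (x : X) (t : ℝ), |t| < ε →
      |pLL p0 ν l x * ∑ i, ((ν i x : ℝ) / (nuSharp ν x : ℝ)) * (γ i * (nuSharp ν x : ℝ)) *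
        Real.exp (t * γ i * (nuSharp ν x : ℝ))| ≤ g x)
    (hksum : ∀ y ∈ 𝒴, Summable fun x : {x : X // Yf x = y} =>
      (pLL p0 ν l x.1 / pLLY Yf p0 ν l y) * wdot γ ν x.1)
    (hpsum : ∀ t : ℝ, |t| < ε → Summable fun x : X => pLL p0 ν l x *
      ∑ i, ((ν i x : ℝ) / (nuSharp ν x : ℝ)) * Real.exp (t * γ i * (nuSharp ν x : ℝ))) :
    HasDerivAt (fun t : ℝ => Aaux Yf p0 ν 𝒴 (t • γ) l)
      ((𝒴.map fun y => kExp Yf p0 ν l y (fun x => wdot γ ν x)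
        - pExp p0 ν l (fun x => wdot γ ν x)).sum) 0 ∧
    HasDerivAt (fun t : ℝ => LL Yf p0 ν 𝒴 (l + t • γ))
      ((𝒴.map fun y => kExp Yf p0 ν l y (fun x => wdot γ ν x)
        - pExp p0 ν l (fun x => wdot γ ν x)).sum) 0 :=
  auxiliary_likelihood_derivatives_agree_general Yf p0 hp0 ν 𝒴 l γ hZl hpos ε hε hdom1 hdom2 hpsum
end

section
/- Under the stated setup, fix λ ∈ ℝ^n with Z_λ finite and a candidate property function c : X → ℕ with c(x) > 0 for some x ∈ X, and define the approximate gain G_c(α, λ) = ∑_{y∈𝒴} (1 + k_λ[α c] − p_λ[e^{α c}]) for α ∈ ℝ. Then α ↦ G_c(α, λ) is strictly concave, and α̂ ∈ ℝ is a global maximizer of G_c(·, λ) if and only if it satisfies ∑_{y∈𝒴} k_λ[c] = ∑_{y∈𝒴} p_λ[c e^{α̂ c}]; moreover such a maximizer, if it exists, is unique. -/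
/- Common setup: log-linear models over proof trees (complete data X) and
   queries (incomplete data Y). -/

variable {X Y : Type*}

/-- approximate gain `G_c(α,λ) = ∑_{y∈𝒴} (1 + k_λ[αc] − p_λ[e^{αc}])` of adding
a candidate property `c` with log-parameter `α`. -/
noncomputable def Gc (Yf : X → Y) (p0 : X → ℝ) {n : ℕ} (ν : Fin n → X → ℕ)
    (𝒴 : Multiset Y) (c : X → ℕ) (l : Fin n → ℝ) (α : ℝ) : ℝ :=
  (𝒴.map fun y =>
    1 + kExp Yf p0 ν l y (fun x => α * (c x : ℝ))
      - pExp p0 ν l (fun x => Real.exp (α * (c x : ℝ)))).sum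

/-
The gain is `G_c(α) = |𝒴| (1 - E(α)) + α ∑_y k_λ[c]` with `E(α) = p_λ[e^{α c}]`. As a positive
combination of the convex functions `α ↦ e^{α c(x)}`, at least one of which (`c(x) > 0`) is strictly
convex, `E` is strictly convex, so `G_c` is strictly concave. A differentiable concave function on
`ℝ` is maximal exactly where its derivative `∑_y k_λ[c] - |𝒴| p_λ[c e^{α c}]` vanishes, and a
strictly concave function has at most one maximizer.
-/

open Set

theorem ConcaveOn.isMaxOn_iff_hasDerivAt_eq_zero {S : Set ℝ} {f : ℝ → ℝ} {x f' : ℝ}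
    (hf : ConcaveOn ℝ S f) (hx : x ∈ interior S) (hd : HasDerivAt f f' x) :
    IsMaxOn f S x ↔ f' = 0 := by
  refine ⟨fun hmax => (hmax.isLocalMax (mem_interior_iff_mem_nhds.1 hx)).hasDerivAt_eq_zero hd,
    fun hf' => ?_⟩
  have hrd : derivWithin (-f) (Ioi x) x = 0 := by
    rw [hd.neg.hasDerivWithinAt.derivWithin (uniqueDiffWithinAt_Ioi x), hf', neg_zero]
  simpa using (hf.neg.isMinOn_of_rightDeriv_eq_zero hx hrd).neg

theorem strictConvexOn_tsum {ι E : Type*} [AddCommGroup E] [Module ℝ E] {s : Set E}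
    {f : ι → E → ℝ} (hf : ∀ i, ConvexOn ℝ s (f i)) {i₀ : ι} (hi₀ : StrictConvexOn ℝ s (f i₀))
    (hsum : ∀ x ∈ s, Summable fun i => f i x) :
    StrictConvexOn ℝ s fun x => ∑' i, f i x := by
  refine ⟨hi₀.1, fun x hx y hy hxy a b ha hb hab => ?_⟩
  have hxy_sum : Summable fun i => a • f i x + b • f i y :=
    ((hsum x hx).const_smul a).add ((hsum y hy).const_smul b)
  calc ∑' i, f i (a • x + b • y)
      < ∑' i, (a • f i x + b • f i y) :=
        (hsum _ (hi₀.1 hx hy ha.le hb.le hab)).tsum_lt_tsum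
          (fun i => (hf i).2 hx hy ha.le hb.le hab) (hi₀.2 hx hy hxy ha hb hab) hxy_sum
    _ = a • ∑' i, f i x + b • ∑' i, f i y := by
        rw [(hsum x hx).const_smul a |>.tsum_add ((hsum y hy).const_smul b), tsum_const_smul'' a,
          tsum_const_smul'' b]

theorem convexOn_mul_exp_mul {w : ℝ} (hw : 0 ≤ w) (k : ℝ) :
    ConvexOn ℝ univ fun α => w * Real.exp (α * k) := by
  refine ⟨convex_univ, fun x _ y _ a b ha hb hab => ?_⟩
  have hexp := convexOn_exp.2 (mem_univ (x * k)) (mem_univ (y * k)) ha hb hab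
  simp only [smul_eq_mul] at hexp ⊢
  calc w * Real.exp ((a * x + b * y) * k) = w * Real.exp (a * (x * k) + b * (y * k)) := by
        ring_nf
    _ ≤ w * (a * Real.exp (x * k) + b * Real.exp (y * k)) := by gcongr
    _ = a * (w * Real.exp (x * k)) + b * (w * Real.exp (y * k)) := by ring

theorem strictConvexOn_mul_exp_mul {w k : ℝ} (hw : 0 < w) (hk : k ≠ 0) :
    StrictConvexOn ℝ univ fun α => w * Real.exp (α * k) := by
  refine ⟨convex_univ, fun x _ y _ hxy a b ha hb hab => ?_⟩
  have hexp := strictConvexOn_exp.2 (mem_univ (x * k)) (mem_univ (y * k))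
    (by simpa [hk] using hxy) ha hb hab
  simp only [smul_eq_mul] at hexp ⊢
  calc w * Real.exp ((a * x + b * y) * k) = w * Real.exp (a * (x * k) + b * (y * k)) := by
        ring_nf
    _ < w * (a * Real.exp (x * k) + b * Real.exp (y * k)) := by gcongr
    _ = a * (w * Real.exp (x * k)) + b * (w * Real.exp (y * k)) := by ring

theorem pLL_pos {p0 : X → ℝ} (hp0 : ∀ x, 0 < p0 x) {n : ℕ} {ν : Fin n → X → ℕ} {l : Fin n → ℝ}
    (hZ : Summable fun x => Real.exp (wdot l ν x) * p0 x) (x : X) : 0 < pLL p0 ν l x := by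
  have hZpos : 0 < Zpart p0 ν l :=
    hZ.tsum_pos (fun x => (mul_pos (Real.exp_pos _) (hp0 x)).le) x
      (mul_pos (Real.exp_pos _) (hp0 x))
  unfold pLL
  have := hp0 x
  positivity

theorem kExp_const_mul (Yf : X → Y) (p0 : X → ℝ) {n : ℕ} (ν : Fin n → X → ℕ) (l : Fin n → ℝ)
    (y : Y) (a : ℝ) (f : X → ℝ) :
    kExp Yf p0 ν l y (fun x => a * f x) = a * kExp Yf p0 ν l y f := by
  unfold kExp
  rw [← tsum_mul_left]
  congr 1 with x
  ring

theorem Gc_eq (Yf : X → Y) (p0 : X → ℝ) {n : ℕ} (ν : Fin n → X → ℕ) (𝒴 : Multiset Y)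
    (c : X → ℕ) (l : Fin n → ℝ) (α : ℝ) :
    Gc Yf p0 ν 𝒴 c l α =
      𝒴.card * (1 - pExp p0 ν l (fun x => Real.exp (α * c x)))
        + α * (𝒴.map fun y => kExp Yf p0 ν l y (fun x => c x)).sum := by
  simp only [Gc, kExp_const_mul, add_sub_right_comm, Multiset.sum_map_add,
    Multiset.sum_map_mul_left, Multiset.map_const', Multiset.sum_replicate, nsmul_eq_mul]

theorem gain_strictly_concave_and_stationarity_general
    {X Y : Type*} (Yf : X → Y)
    (p0 : X → ℝ) (hp0 : ∀ x, 0 < p0 x)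
    {n : ℕ} (ν : Fin n → X → ℕ)
    (𝒴 : Multiset Y) (h𝒴 : 𝒴 ≠ 0) (l : Fin n → ℝ)
    (hZl : Summable fun x : X => Real.exp (wdot l ν x) * p0 x)
    (c : X → ℕ) (hc : ∃ x : X, 0 < c x)
    (hpsum : ∀ α : ℝ, Summable fun x : X => pLL p0 ν l x * Real.exp (α * (c x : ℝ)))
    (hpd : ∀ α : ℝ,
      HasDerivAt (fun a : ℝ => pExp p0 ν l (fun x => Real.exp (a * (c x : ℝ))))
        (pExp p0 ν l (fun x => (c x : ℝ) * Real.exp (α * (c x : ℝ)))) α) :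
    StrictConcaveOn ℝ (Set.univ : Set ℝ) (Gc Yf p0 ν 𝒴 c l) ∧
    (∀ αh : ℝ,
      (∀ α : ℝ, Gc Yf p0 ν 𝒴 c l α ≤ Gc Yf p0 ν 𝒴 c l αh) ↔
      (𝒴.map fun y => kExp Yf p0 ν l y (fun x => (c x : ℝ))).sum =
      (𝒴.map fun _ => pExp p0 ν l
        (fun x => (c x : ℝ) * Real.exp (αh * (c x : ℝ)))).sum) ∧
    (∀ α₁ α₂ : ℝ,
      (∀ α : ℝ, Gc Yf p0 ν 𝒴 c l α ≤ Gc Yf p0 ν 𝒴 c l α₁) →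
      (∀ α : ℝ, Gc Yf p0 ν 𝒴 c l α ≤ Gc Yf p0 ν 𝒴 c l α₂) →
      α₁ = α₂) := by
  obtain ⟨x₀, hx₀⟩ := hc
  set m : ℝ := (𝒴.card : ℝ)
  have hm : 0 < m := by simpa [m, Multiset.card_pos]
  set S := (𝒴.map fun y => kExp Yf p0 ν l y (fun x => (c x : ℝ))).sum
  set E := fun a : ℝ => pExp p0 ν l (fun x => Real.exp (a * (c x : ℝ)))
  have hE : StrictConvexOn ℝ univ E :=
    strictConvexOn_tsum (fun x => convexOn_mul_exp_mul (pLL_pos hp0 hZl x).le (c x))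
      (strictConvexOn_mul_exp_mul (pLL_pos hp0 hZl x₀) (by positivity)) (fun α _ => hpsum α)
  have hG : Gc Yf p0 ν 𝒴 c l = fun α => m * (1 - E α) + α * S := funext (Gc_eq Yf p0 ν 𝒴 c l)
  have hconc : StrictConcaveOn ℝ univ (Gc Yf p0 ν 𝒴 c l) := by
    refine ⟨convex_univ, fun x _ y _ hxy a b ha hb hab => ?_⟩
    have hEab := mul_lt_mul_of_pos_left (hE.2 trivial trivial hxy ha hb hab) hm
    simp only [hG, smul_eq_mul] at hEab ⊢
    linear_combination hEab + m * hab
  have hderiv : ∀ α, HasDerivAt (Gc Yf p0 ν 𝒴 c l)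
      (S - m * pExp p0 ν l (fun x => (c x : ℝ) * Real.exp (α * (c x : ℝ)))) α := by
    intro α
    rw [hG]
    exact ((((hpd α).const_sub 1).const_mul m).add ((hasDerivAt_id' α).mul_const S)).congr_deriv
      (by ring)
  refine ⟨hconc, fun αh => ?_, fun α₁ α₂ h₁ h₂ => ?_⟩
  · rw [← isMaxOn_univ_iff, hconc.concaveOn.isMaxOn_iff_hasDerivAt_eq_zero (by simp) (hderiv αh),
      Multiset.map_const', Multiset.sum_replicate, nsmul_eq_mul, sub_eq_zero]
  · exact hconc.eq_of_isMaxOn (isMaxOn_univ_iff.2 h₁) (isMaxOn_univ_iff.2 h₂) trivial trivial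

/-- `G_c(·,λ)` is strictly concave; `α̂` is a global maximizer iff
`∑_y k_λ[c] = ∑_y p_λ[c e^{α̂ c}]`, and the maximizer (if it exists) is unique. -/
theorem gain_strictly_concave_and_stationarity
    {X Y : Type*} [Countable X] (Yf : X → Y)
    (p0 : X → ℝ) (hp0 : ∀ x, 0 < p0 x) (hp0sum : ∑' x : X, p0 x = 1)
    {n : ℕ} (ν : Fin n → X → ℕ) (hν : ∀ x, 1 ≤ nuSharp ν x)
    (𝒴 : Multiset Y) (h𝒴 : 𝒴 ≠ 0) (l : Fin n → ℝ)
    (hZl : Summable fun x : X => Real.exp (wdot l ν x) * p0 x)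
    (hpos : ∀ y ∈ 𝒴, 0 < pLLY Yf p0 ν l y)
    (c : X → ℕ) (hc : ∃ x : X, 0 < c x)
    (hksum : ∀ y ∈ 𝒴, Summable fun x : {x : X // Yf x = y} =>
      (pLL p0 ν l x.1 / pLLY Yf p0 ν l y) * (c x.1 : ℝ))
    (hpsum : ∀ α : ℝ, Summable fun x : X => pLL p0 ν l x * Real.exp (α * (c x : ℝ)))
    (hpcsum : ∀ α : ℝ, Summable fun x : X =>
      pLL p0 ν l x * ((c x : ℝ) * Real.exp (α * (c x : ℝ))))
    (hpd : ∀ α : ℝ,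
      HasDerivAt (fun a : ℝ => pExp p0 ν l (fun x => Real.exp (a * (c x : ℝ))))
        (pExp p0 ν l (fun x => (c x : ℝ) * Real.exp (α * (c x : ℝ)))) α) :
    StrictConcaveOn ℝ (Set.univ : Set ℝ) (Gc Yf p0 ν 𝒴 c l) ∧
    (∀ αh : ℝ,
      (∀ α : ℝ, Gc Yf p0 ν 𝒴 c l α ≤ Gc Yf p0 ν 𝒴 c l αh) ↔
      (𝒴.map fun y => kExp Yf p0 ν l y (fun x => (c x : ℝ))).sum =
      (𝒴.map fun _ => pExp p0 ν l
        (fun x => (c x : ℝ) * Real.exp (αh * (c x : ℝ)))).sum) ∧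
    (∀ α₁ α₂ : ℝ,
      (∀ α : ℝ, Gc Yf p0 ν 𝒴 c l α ≤ Gc Yf p0 ν 𝒴 c l α₁) →
      (∀ α : ℝ, Gc Yf p0 ν 𝒴 c l α ≤ Gc Yf p0 ν 𝒴 c l α₂) →
      α₁ = α₂) :=
  gain_strictly_concave_and_stationarity_general Yf p0 hp0 ν 𝒴 h𝒴 l hZl c hc hpsum hpd
end

section
/- Under the stated setup, fix λ ∈ ℝ^n with Z_λ finite and a candidate property function c : X → ℕ, and for α ∈ ℝ such that Z' := ∑_{x∈X} e^{α c(x)} p_λ(x) is finite, define the extended model p'(x) = (Z')^{-1} e^{α c(x)} p_λ(x), with p'(y) = ∑_{x∈X(y)} p'(x) and extended log-likelihood L'(α) = ∑_{y∈𝒴} ln p'(y). Then the approximate gain G_c(α, λ) = ∑_{y∈𝒴} (1 + k_λ[α c] − p_λ[e^{α c}]) is a lower bound on the true gain in log-likelihood: G_c(α, λ) ≤ L'(α) − L(λ). -/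
/- Common setup: log-linear models over proof trees (complete data X) and
   queries (incomplete data Y). -/

variable {X Y : Type*}

/-- normalizing constant `Z'` of the extended model. -/
noncomputable def Zext (p0 : X → ℝ) {n : ℕ} (ν : Fin n → X → ℕ) (l : Fin n → ℝ)
    (c : X → ℕ) (α : ℝ) : ℝ :=
  ∑' x : X, Real.exp (α * (c x : ℝ)) * pLL p0 ν l x

/-- extended model `p'(x) = (Z')⁻¹ e^{α c(x)} p_λ(x)`. -/
noncomputable def pext (p0 : X → ℝ) {n : ℕ} (ν : Fin n → X → ℕ) (l : Fin n → ℝ)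
    (c : X → ℕ) (α : ℝ) (x : X) : ℝ :=
  (Zext p0 ν l c α)⁻¹ * Real.exp (α * (c x : ℝ)) * pLL p0 ν l x

/-- `p'(y) = ∑_{x ∈ X(y)} p'(x)`. -/
noncomputable def pextY (Yf : X → Y) (p0 : X → ℝ) {n : ℕ} (ν : Fin n → X → ℕ)
    (l : Fin n → ℝ) (c : X → ℕ) (α : ℝ) (y : Y) : ℝ :=
  ∑' x : {x : X // Yf x = y}, pext p0 ν l c α x.1

/-- extended log-likelihood `L'(α) = ∑_{y∈𝒴} ln p'(y)`. -/
noncomputable def Lext (Yf : X → Y) (p0 : X → ℝ) {n : ℕ} (ν : Fin n → X → ℕ)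
    (𝒴 : Multiset Y) (l : Fin n → ℝ) (c : X → ℕ) (α : ℝ) : ℝ :=
  (𝒴.map fun y => Real.log (pextY Yf p0 ν l c α y)).sum

/-!
Fix an observation `y` and write `q = p_λ(· | y)` on `X(y)`. Since
`p'(y) / p_λ(y) = q[e^{αc}] / Z'` with `Z' = p_λ[e^{αc}]`, the true gain at `y` is
`ln q[e^{αc}] - ln Z'`. Jensen's inequality for the concave logarithm gives
`q[αc] ≤ ln q[e^{αc}]`, and `ln Z' ≤ Z' - 1` gives `1 - Z' ≤ -ln Z'`; adding the two
bounds the `y`-term of `G_c` by the `y`-term of `L'(α) - L(λ)`.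
-/

open Real

theorem tsum_mul_exp_pos {ι : Type*} {q f : ι → ℝ} (hq : ∀ i, 0 ≤ q i)
    (hq_one : ∑' i, q i = 1) (hqexp : Summable fun i => q i * exp (f i)) :
    0 < ∑' i, q i * exp (f i) := by
  obtain ⟨i₀, hi₀⟩ : ∃ i, q i ≠ 0 := by
    by_contra! h
    simp [h] at hq_one
  exact hqexp.tsum_pos (fun i => mul_nonneg (hq i) (exp_pos _).le) i₀
    (mul_pos ((hq i₀).lt_of_ne' hi₀) (exp_pos _))

theorem tsum_mul_le_log_tsum_mul_exp {ι : Type*} {q f : ι → ℝ} (hq : ∀ i, 0 ≤ q i)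
    (hq_one : ∑' i, q i = 1) (hqf : Summable fun i => q i * f i)
    (hqexp : Summable fun i => q i * exp (f i)) :
    ∑' i, q i * f i ≤ log (∑' i, q i * exp (f i)) := by
  set M := ∑' i, q i * exp (f i)
  have hM : 0 < M := tsum_mul_exp_pos hq hq_one hqexp
  have hq_sum : Summable q := by
    by_contra h
    simp [tsum_eq_zero_of_not_summable h] at hq_one
  have hpoint : ∀ i, q i * f i ≤ q i * (log M - 1) + q i * exp (f i) / M := fun i => by
    have h := add_one_le_exp (f i - log M)
    rw [exp_sub, exp_log hM] at h
    have := mul_le_mul_of_nonneg_left h (hq i)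
    linarith [mul_div_assoc (q i) (exp (f i)) M]
  calc ∑' i, q i * f i
      ≤ ∑' i, (q i * (log M - 1) + q i * exp (f i) / M) :=
        hqf.tsum_le_tsum hpoint ((hq_sum.mul_right _).add (hqexp.div_const M))
    _ = log M := by
        rw [(hq_sum.mul_right _).tsum_add (hqexp.div_const M), tsum_mul_right, tsum_div_const,
          hq_one, div_self hM.ne']
        ring

variable {n : ℕ}

theorem pLL_nonneg {p0 : X → ℝ} (hp0 : ∀ x, 0 < p0 x) (ν : Fin n → X → ℕ) (l : Fin n → ℝ)
    (x : X) : 0 ≤ pLL p0 ν l x := by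
  have hZ : 0 ≤ Zpart p0 ν l := tsum_nonneg fun x => mul_nonneg (exp_pos _).le (hp0 x).le
  have := (hp0 x).le
  unfold pLL
  positivity

theorem pExp_exp_eq_Zext (p0 : X → ℝ) (ν : Fin n → X → ℕ) (l : Fin n → ℝ) (c : X → ℕ)
    (α : ℝ) : pExp p0 ν l (fun x => exp (α * c x)) = Zext p0 ν l c α :=
  tsum_congr fun _ => mul_comm _ _

theorem pextY_eq (Yf : X → Y) (p0 : X → ℝ) (ν : Fin n → X → ℕ) (l : Fin n → ℝ) (c : X → ℕ)
    (α : ℝ) (y : Y) :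
    pextY Yf p0 ν l c α y
      = (Zext p0 ν l c α)⁻¹ * ∑' x : {x // Yf x = y}, exp (α * c x.1) * pLL p0 ν l x.1 := by
  rw [pextY, ← tsum_mul_left]
  exact tsum_congr fun _ => mul_assoc _ _ _

theorem kExp_le_log_tsum_sub_log {Yf : X → Y} {p0 : X → ℝ} (hp0 : ∀ x, 0 < p0 x)
    {ν : Fin n → X → ℕ} {l : Fin n → ℝ} {c : X → ℕ} {α : ℝ}
    (hZext : Summable fun x : X => exp (α * c x) * pLL p0 ν l x) {y : Y}
    (hpos : 0 < pLLY Yf p0 ν l y)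
    (hksum : Summable fun x : {x // Yf x = y} =>
      (pLL p0 ν l x.1 / pLLY Yf p0 ν l y) * (α * c x.1)) :
    kExp Yf p0 ν l y (fun x => α * c x)
      ≤ log (∑' x : {x // Yf x = y}, exp (α * c x.1) * pLL p0 ν l x.1)
        - log (pLLY Yf p0 ν l y) := by
  set S := pLLY Yf p0 ν l y
  have hexp : ∀ x : {x // Yf x = y},
      pLL p0 ν l x.1 / S * exp (α * c x.1) = exp (α * c x.1) * pLL p0 ν l x.1 / S :=
    fun _ => by ring
  have hq : ∀ x : {x // Yf x = y}, 0 ≤ pLL p0 ν l x.1 / S :=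
    fun x => div_nonneg (pLL_nonneg hp0 ν l x.1) hpos.le
  have hq_one : ∑' x : {x // Yf x = y}, pLL p0 ν l x.1 / S = 1 := by
    rw [tsum_div_const]
    exact div_self hpos.ne'
  have hqexp : Summable fun x : {x // Yf x = y} => pLL p0 ν l x.1 / S * exp (α * c x.1) := by
    simp only [hexp]
    exact (hZext.subtype _).div_const S
  have hjensen := tsum_mul_le_log_tsum_mul_exp hq hq_one hksum hqexp
  have hT := tsum_mul_exp_pos hq hq_one hqexp
  simp only [hexp, tsum_div_const] at hjensen hT
  rwa [log_div (div_pos_iff_of_pos_right hpos |>.1 hT).ne' hpos.ne'] at hjensen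

theorem gain_term_le_log_sub_log {Yf : X → Y} {p0 : X → ℝ} (hp0 : ∀ x, 0 < p0 x)
    {ν : Fin n → X → ℕ} {l : Fin n → ℝ} {c : X → ℕ} {α : ℝ}
    (hZext : Summable fun x : X => exp (α * c x) * pLL p0 ν l x) {y : Y}
    (hpos : 0 < pLLY Yf p0 ν l y) (hpos' : 0 < pextY Yf p0 ν l c α y)
    (hksum : Summable fun x : {x // Yf x = y} =>
      (pLL p0 ν l x.1 / pLLY Yf p0 ν l y) * (α * c x.1)) :
    1 + kExp Yf p0 ν l y (fun x => α * c x) - pExp p0 ν l (fun x => exp (α * c x))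
      ≤ log (pextY Yf p0 ν l c α y) - log (pLLY Yf p0 ν l y) := by
  have hk := kExp_le_log_tsum_sub_log hp0 hZext hpos hksum
  set T := ∑' x : {x // Yf x = y}, exp (α * c x.1) * pLL p0 ν l x.1
  set Z' := Zext p0 ν l c α
  rw [pextY_eq] at hpos' ⊢
  have hT : 0 ≤ T := tsum_nonneg fun x => mul_nonneg (exp_pos _).le (pLL_nonneg hp0 ν l x.1)
  have hZ' : 0 < Z' := inv_pos.1 (pos_of_mul_pos_left hpos' hT)
  have hT' : 0 < T := pos_of_mul_pos_right hpos' (inv_pos.2 hZ').le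
  rw [pExp_exp_eq_Zext, log_mul (inv_pos.2 hZ').ne' hT'.ne', log_inv]
  linarith [log_le_sub_one_of_pos hZ']

theorem gain_lower_bound_general
    {X Y : Type*} (Yf : X → Y)
    (p0 : X → ℝ) (hp0 : ∀ x, 0 < p0 x)
    {n : ℕ} (ν : Fin n → X → ℕ)
    (𝒴 : Multiset Y) (l : Fin n → ℝ) (c : X → ℕ) (α : ℝ)
    (hZext : Summable fun x : X => Real.exp (α * (c x : ℝ)) * pLL p0 ν l x)
    (hpos : ∀ y ∈ 𝒴, 0 < pLLY Yf p0 ν l y)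
    (hpos' : ∀ y ∈ 𝒴, 0 < pextY Yf p0 ν l c α y)
    (hksum : ∀ y ∈ 𝒴, Summable fun x : {x : X // Yf x = y} =>
      (pLL p0 ν l x.1 / pLLY Yf p0 ν l y) * (α * (c x.1 : ℝ))) :
    Gc Yf p0 ν 𝒴 c l α ≤ Lext Yf p0 ν 𝒴 l c α - LL Yf p0 ν 𝒴 l := by
  rw [Lext, LL, ← Multiset.sum_map_sub, Gc]
  exact Multiset.sum_map_le_sum_map _ _ fun y hy =>
    gain_term_le_log_sub_log hp0 hZext (hpos y hy) (hpos' y hy) (hksum y hy)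

/-- The approximate gain is a lower bound on the true gain in log-likelihood:
`G_c(α,λ) ≤ L'(α) − L(λ)`. -/
theorem gain_lower_bound
    {X Y : Type*} [Countable X] (Yf : X → Y)
    (p0 : X → ℝ) (hp0 : ∀ x, 0 < p0 x) (hp0sum : ∑' x : X, p0 x = 1)
    {n : ℕ} (ν : Fin n → X → ℕ) (hν : ∀ x, 1 ≤ nuSharp ν x)
    (𝒴 : Multiset Y) (l : Fin n → ℝ) (c : X → ℕ) (α : ℝ)
    (hZl : Summable fun x : X => Real.exp (wdot l ν x) * p0 x)
    (hZext : Summable fun x : X => Real.exp (α * (c x : ℝ)) * pLL p0 ν l x)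
    (hpos : ∀ y ∈ 𝒴, 0 < pLLY Yf p0 ν l y)
    (hpos' : ∀ y ∈ 𝒴, 0 < pextY Yf p0 ν l c α y)
    (hksum : ∀ y ∈ 𝒴, Summable fun x : {x : X // Yf x = y} =>
      (pLL p0 ν l x.1 / pLLY Yf p0 ν l y) * (α * (c x.1 : ℝ)))
    (hpsum : Summable fun x : X => pLL p0 ν l x * Real.exp (α * (c x : ℝ))) :
    Gc Yf p0 ν 𝒴 c l α ≤ Lext Yf p0 ν 𝒴 l c α - LL Yf p0 ν 𝒴 l :=
  gain_lower_bound_general Yf p0 hp0 ν 𝒴 l c α hZext hpos hpos' hksum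
end
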